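/- Construction of antiperiodic positive SL2-tilings from two Farey polygons and a totally positive matrix: let n, m ≥ 3, let (v_0, …, v_{n−1}) be a Farey n-gon with quiddity (q_0, …, q_{n−1}) and (v'_0, …, v'_{m−1}) a Farey m-gon with quiddity (q'_0, …, q'_{m−1}). Let a, b, c, d be positive integers with ad − bc = 1, q_0·a < b, and q'_0·a < c. If T : ℤ×ℤ → ℤ satisfies T(0,0) = a, T(0,1) = b, T(1,0) = c, T(1,1) = d, and for all (i,j): T(i,j+1) = q_{j mod n}·T(i,j) − T(i,j−1) and T(i+1,j) = q'_{i mod m}·T(i,j) − T(i−1,j), then T is an (n,m)-antiperiodic SL2-tiling and T(i,j) > 0 for all 0 ≤ i ≤ m−1, 0 ≤ j ≤ n−1. -/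

import Mathlib

/-!
Every row and every column of `T` solves a discrete Hill equation
`x (j + 1) = q_j x j - x (j - 1)` whose coefficients are the (periodically extended) quiddity.
The Farey relation `v (j - 1) + v (j + 1) = q_j • v j` shows that `k ↦ det(w, v k)`, with
`w = x₁ v₀ - x₀ v₁`, solves the same equation, so on `0 ≤ k < n` every solution has this form.
Its values at `n` and `n + 1` are `-x₀` and `-x₁`, which gives antiperiodicity. Substituting
`v₁ = q₀ v₀ + v_{n-1}` yields `x k = (x₁ - q₀ x₀) det(v₀, v_k) + x₀ det(v_k, v_{n-1})`, a sum of
nonnegative terms, positive once `0 < x₀` and `q₀ x₀ < x₁`. This makes row `0` and the row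
solution `T 1 - q'₀ T 0` positive, and hence every column. The SL2 condition is the constancy of
the Wronskian of two solutions of the same Hill equation.
-/

/-- `fdet (a,b) (c,d) = a*d - b*c`. -/
def fdet (u v : ℤ × ℤ) : ℤ := u.1 * v.2 - u.2 * v.1

/-- A primitive vector `(a,b) ∈ ℤ²`: `gcd(a,b) = 1`, `b ≥ 0`, and `a = 1` whenever `b = 0`. -/
def IsPrimitive (u : ℤ × ℤ) : Prop := Int.gcd u.1 u.2 = 1 ∧ 0 ≤ u.2 ∧ (u.2 = 0 → u.1 = 1)

/-- A Farey `n`-gon: primitive vectors `v 0, …, v (n-1)` with `det(v i, v j) > 0`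
for `i < j < n`, `det(v i, v (i+1)) = 1` for `i + 1 < n`, and `det(v 0, v (n-1)) = 1`. -/
def IsFareyPolygon (n : ℕ) (v : ℕ → ℤ × ℤ) : Prop :=
  (∀ i < n, IsPrimitive (v i)) ∧
  (∀ i j, i < j → j < n → 0 < fdet (v i) (v j)) ∧
  (∀ i, i + 1 < n → fdet (v i) (v (i + 1)) = 1) ∧
  fdet (v 0) (v (n - 1)) = 1

/-- An SL2-tiling: every adjacent 2×2 minor equals 1. -/
def IsSL2Tiling (a : ℤ → ℤ → ℤ) : Prop :=
  ∀ i j : ℤ, a i j * a (i + 1) (j + 1) - a i (j + 1) * a (i + 1) j = 1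

/-- An `(n,m)`-antiperiodic array: rows are `n`-antiperiodic, columns `m`-antiperiodic. -/
def IsAntiperiodic (n m : ℕ) (a : ℤ → ℤ → ℤ) : Prop :=
  ∀ i j : ℤ, a i (j + (n : ℤ)) = -a i j ∧ a (i + (m : ℤ)) j = -a i j

/-- A positive `m × n` fundamental rectangle: `a i j > 0` for `0 ≤ i ≤ m-1`, `0 ≤ j ≤ n-1`. -/
def HasPosRect (n m : ℕ) (a : ℤ → ℤ → ℤ) : Prop :=
  ∀ i j : ℤ, 0 ≤ i → i ≤ (m : ℤ) - 1 → 0 ≤ j → j ≤ (n : ℤ) - 1 → 0 < a i j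

lemma Int.toNat_natCast_emod_natCast (k n : ℕ) : ((k : ℤ) % (n : ℤ)).toNat = k % n := by
  rw [← Int.natCast_mod, Int.toNat_natCast]

@[simp] lemma fdet_self (u : ℤ × ℤ) : fdet u u = 0 := by
  rw [fdet, mul_comm, sub_self]

lemma fdet_swap (u w : ℤ × ℤ) : fdet w u = -fdet u w := by
  simp only [fdet]; ring

@[simp] lemma fdet_add_right (u w z : ℤ × ℤ) : fdet u (w + z) = fdet u w + fdet u z := by
  simp only [fdet, Prod.fst_add, Prod.snd_add]; ring

@[simp] lemma fdet_sub_right (u w z : ℤ × ℤ) : fdet u (w - z) = fdet u w - fdet u z := by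
  simp only [fdet, Prod.fst_sub, Prod.snd_sub]; ring

@[simp] lemma fdet_neg_right (u w : ℤ × ℤ) : fdet u (-w) = -fdet u w := by
  simp only [fdet, Prod.fst_neg, Prod.snd_neg]; ring

@[simp] lemma fdet_smul_right (r : ℤ) (u w : ℤ × ℤ) : fdet u (r • w) = r * fdet u w := by
  simp only [fdet, Prod.smul_fst, Prod.smul_snd, smul_eq_mul]; ring

@[simp] lemma fdet_add_left (u w z : ℤ × ℤ) : fdet (u + w) z = fdet u z + fdet w z := by
  simp only [fdet, Prod.fst_add, Prod.snd_add]; ring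

@[simp] lemma fdet_sub_left (u w z : ℤ × ℤ) : fdet (u - w) z = fdet u z - fdet w z := by
  simp only [fdet, Prod.fst_sub, Prod.snd_sub]; ring

@[simp] lemma fdet_neg_left (u w : ℤ × ℤ) : fdet (-u) w = -fdet u w := by
  simp only [fdet, Prod.fst_neg, Prod.snd_neg]; ring

@[simp] lemma fdet_smul_left (r : ℤ) (u w : ℤ × ℤ) : fdet (r • u) w = r * fdet u w := by
  simp only [fdet, Prod.smul_fst, Prod.smul_snd, smul_eq_mul]; ring

/-- Cramer's rule `det(p,w) u + det(w,u) p + det(u,p) w = 0`, specialised to unimodular pairs. -/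
lemma add_eq_fdet_smul_of_fdet_eq_one {u p w : ℤ × ℤ} (hu : fdet u p = 1) (hw : fdet p w = 1) :
    u + w = fdet u w • p := by
  simp only [fdet] at hu hw ⊢
  ext <;> simp only [Prod.fst_add, Prod.snd_add, Prod.smul_fst, Prod.smul_snd, smul_eq_mul]
  · linear_combination (-u.1) * hw - w.1 * hu
  · linear_combination (-u.2) * hw - w.2 * hu

def IsQuiddity (n : ℕ) (v : ℕ → ℤ × ℤ) (q : ℕ → ℤ) : Prop :=
  ∀ i, q i = ((fdet (v ((i + n - 1) % n)) (v ((i + 1) % n))).natAbs : ℤ)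

namespace IsFareyPolygon

variable {n : ℕ} {v : ℕ → ℤ × ℤ} {q : ℕ → ℤ}

lemma fdet_pos (hF : IsFareyPolygon n v) {i j : ℕ} (hij : i < j) (hj : j < n) :
    0 < fdet (v i) (v j) :=
  hF.2.1 i j hij hj

lemma fdet_nonneg (hF : IsFareyPolygon n v) {i j : ℕ} (hij : i ≤ j) (hj : j < n) :
    0 ≤ fdet (v i) (v j) := by
  rcases hij.eq_or_lt with rfl | hij
  · rw [fdet_self]
  · exact (hF.fdet_pos hij hj).le

lemma fdet_succ (hF : IsFareyPolygon n v) {i : ℕ} (hi : i + 1 < n) : fdet (v i) (v (i + 1)) = 1 :=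
  hF.2.2.1 i hi

lemma fdet_zero_last (hF : IsFareyPolygon n v) : fdet (v 0) (v (n - 1)) = 1 :=
  hF.2.2.2

lemma add_eq_quiddity_smul (hF : IsFareyPolygon n v) (hq : IsQuiddity n v q) {k : ℕ}
    (hk : k + 2 < n) : v k + v (k + 2) = q (k + 1) • v (k + 1) := by
  have hq : q (k + 1) = fdet (v k) (v (k + 2)) := by
    rw [hq, show k + 1 + n - 1 = k + n by omega, Nat.add_mod_right, Nat.mod_eq_of_lt (by omega),
      Nat.mod_eq_of_lt hk, Int.natAbs_of_nonneg (hF.fdet_pos (by omega) hk).le]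
  rw [hq]
  exact add_eq_fdet_smul_of_fdet_eq_one (hF.fdet_succ (by omega)) (hF.fdet_succ hk)

lemma eq_quiddity_zero_smul_add (hF : IsFareyPolygon n v) (hq : IsQuiddity n v q) (hn : 3 ≤ n) :
    v 1 = q 0 • v 0 + v (n - 1) := by
  have hq : q 0 = fdet (v 1) (v (n - 1)) := by
    rw [hq, zero_add, Nat.mod_eq_of_lt (by omega), Nat.mod_eq_of_lt (by omega), fdet_swap,
      Int.natAbs_neg, Int.natAbs_of_nonneg (hF.fdet_pos (by omega) (by omega)).le]
  have h := add_eq_fdet_smul_of_fdet_eq_one (u := -v (n - 1)) (p := v 0) (w := v 1)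
    (by rw [fdet_neg_left, fdet_swap, neg_neg, hF.fdet_zero_last]) (hF.fdet_succ (by omega))
  rw [fdet_neg_left, ← fdet_swap] at h
  rw [hq, ← h]
  abel

lemma sub_eq_quiddity_last_smul (hF : IsFareyPolygon n v) (hq : IsQuiddity n v q) (hn : 3 ≤ n) :
    v (n - 2) - v 0 = q (n - 1) • v (n - 1) := by
  have hq : q (n - 1) = fdet (v 0) (v (n - 2)) := by
    rw [hq, show n - 1 + n - 1 = n - 2 + n by omega, Nat.add_mod_right, Nat.mod_eq_of_lt (by omega),
      Nat.sub_add_cancel (by omega), Nat.mod_self, fdet_swap, Int.natAbs_neg,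
      Int.natAbs_of_nonneg (hF.fdet_pos (by omega) (by omega)).le]
  have h := add_eq_fdet_smul_of_fdet_eq_one (u := v (n - 2)) (p := v (n - 1)) (w := -v 0)
    (by simpa [show n - 2 + 1 = n - 1 by omega] using hF.fdet_succ (i := n - 2) (by omega))
    (by rw [fdet_neg_right, fdet_swap, neg_neg, hF.fdet_zero_last])
  rw [fdet_neg_right, ← fdet_swap] at h
  rw [hq, ← h, sub_eq_add_neg]

end IsFareyPolygon

def IsHillSolution (c x : ℤ → ℤ) : Prop :=
  ∀ j, x (j + 1) = c j * x j - x (j - 1)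

namespace IsHillSolution

variable {c x y : ℤ → ℤ}

lemma add_one_add_one (hx : IsHillSolution c x) (j : ℤ) :
    x (j + 1 + 1) = c (j + 1) * x (j + 1) - x j := by
  rw [hx (j + 1), add_sub_cancel_right]

lemma sub_const_mul (hx : IsHillSolution c x) (hy : IsHillSolution c y) (r : ℤ) :
    IsHillSolution c (fun j => x j - r * y j) := fun j => by
  simp only [hx j, hy j]; ring

lemma wronskian_eq (hx : IsHillSolution c x) (hy : IsHillSolution c y) (j : ℤ) :
    x j * y (j + 1) - x (j + 1) * y j = x 0 * y 1 - x 1 * y 0 := by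
  have h : Function.Periodic (fun j => x j * y (j + 1) - x (j + 1) * y j) 1 := fun j => by
    simp only [hx.add_one_add_one, hy.add_one_add_one]; ring
  simpa using h.int_mul_eq j

lemma eq_of_eq_zero_of_eq_one (hx : IsHillSolution c x) (hy : IsHillSolution c y) (h0 : x 0 = y 0)
    (h1 : x 1 = y 1) : x = y := by
  have h : Function.Periodic (fun j => x j = y j ∧ x (j + 1) = y (j + 1)) 1 := fun j => by
    simp only [hx.add_one_add_one, hy.add_one_add_one]
    exact propext ⟨fun ⟨h, h'⟩ => ⟨by rw [h] at h'; linarith, h⟩,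
      fun ⟨h, h'⟩ => ⟨h', by rw [h, h']⟩⟩
  funext j
  have hj := h.int_mul_eq j
  simp only [Int.cast_id, mul_one, zero_add] at hj
  exact (Eq.mpr hj ⟨h0, h1⟩).1

variable {n : ℕ} {v : ℕ → ℤ × ℤ} {q : ℕ → ℤ}

lemma apply_natCast_add_one (hx : IsHillSolution (fun j => q (j % (n : ℤ)).toNat) x) {k : ℕ}
    (hk : k < n) :
    x (k + 1) = q k * x k - x (k - 1) := by
  rw [hx k]
  dsimp only
  rw [Int.toNat_natCast_emod_natCast, Nat.mod_eq_of_lt hk]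

lemma eq_fdet_of_isFareyPolygon (hx : IsHillSolution (fun j => q (j % (n : ℤ)).toNat) x)
    (hF : IsFareyPolygon n v) (hq : IsQuiddity n v q) (hn : 3 ≤ n) {k : ℕ} (hk : k < n) :
    x k = fdet (x 1 • v 0 - x 0 • v 1) (v k) := by
  set w := x 1 • v 0 - x 0 • v 1
  have h01 : fdet (v 0) (v 1) = 1 := hF.fdet_succ (i := 0) (by omega)
  suffices ∀ k, k + 1 < n → x k = fdet w (v k) ∧ x (k + 1 : ℕ) = fdet w (v (k + 1)) by
    rcases k with _ | k
    · exact (this 0 (by omega)).1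
    · exact (this k hk).2
  intro k hk
  induction k with
  | zero =>
    simp only [w, fdet_sub_left, fdet_smul_left, fdet_self, fdet_swap (v 0) (v 1), h01]
    constructor <;> push_cast <;> ring
  | succ k ih =>
    obtain ⟨hk0, hk1⟩ := ih (by omega)
    refine ⟨hk1, ?_⟩
    have := hx.apply_natCast_add_one (k := k + 1) (by omega)
    push_cast at this hk1 ⊢
    rw [this, add_sub_cancel_right, hk0, hk1, ← fdet_smul_right,
      ← hF.add_eq_quiddity_smul hq (k := k) (by omega), fdet_add_right]
    ring

lemma antiperiodic (hx : IsHillSolution (fun j => q (j % (n : ℤ)).toNat) x)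
    (hF : IsFareyPolygon n v) (hq : IsQuiddity n v q) (hn : 3 ≤ n) (j : ℤ) :
    x (j + n) = -x j := by
  have hrep := fun k (hk : k < n) => hx.eq_fdet_of_isFareyPolygon hF hq hn hk
  set w := x 1 • v 0 - x 0 • v 1
  have hw0 : x 0 = fdet w (v 0) := by exact_mod_cast hrep 0 (by omega)
  have hw1 : x 1 = fdet w (v 1) := by exact_mod_cast hrep 1 (by omega)
  have hxn : x n = -x 0 := by
    have h := hx.apply_natCast_add_one (k := n - 1) (by omega)
    rw [show ((n - 1 : ℕ) : ℤ) + 1 = n by omega,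
      show ((n - 1 : ℕ) : ℤ) - 1 = (n - 2 : ℕ) by omega, hrep (n - 1) (by omega),
      hrep (n - 2) (by omega), ← fdet_smul_right, ← hF.sub_eq_quiddity_last_smul hq hn,
      fdet_sub_right] at h
    rw [h, hw0]
    ring
  have hxn1 : x (n + 1) = -x 1 := by
    have h := hx n
    dsimp only at h
    rw [Int.emod_self, Int.toNat_zero, hxn, show (n : ℤ) - 1 = (n - 1 : ℕ) by omega,
      hrep (n - 1) (by omega)] at h
    rw [h, hw0, hw1, hF.eq_quiddity_zero_smul_add hq hn, fdet_add_right, fdet_smul_right]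
    ring
  have hshift : IsHillSolution (fun j => q (j % (n : ℤ)).toNat) (fun j => -x (j + n)) := by
    intro j
    dsimp only
    rw [show j + 1 + n = j + n + 1 by ring, hx (j + n), show j + n - 1 = j - 1 + n by ring]
    dsimp only
    rw [Int.add_emod_right]
    ring
  have h := hshift.eq_of_eq_zero_of_eq_one hx (by simp [hxn]) (by simp [add_comm, hxn1])
  exact neg_eq_iff_eq_neg.mp (congrFun h j)

lemma pos_of_isFareyPolygon (hx : IsHillSolution (fun j => q (j % (n : ℤ)).toNat) x)
    (hF : IsFareyPolygon n v) (hq : IsQuiddity n v q) (hn : 3 ≤ n) (h0 : 0 < x 0)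
    (h1 : q 0 * x 0 < x 1) {j : ℤ} (hj0 : 0 ≤ j) (hjn : j < n) : 0 < x j := by
  lift j to ℕ using hj0
  rcases Nat.eq_zero_or_pos j with rfl | hj
  · exact_mod_cast h0
  have key : x j = (x 1 - q 0 * x 0) * fdet (v 0) (v j) + x 0 * fdet (v j) (v (n - 1)) := by
    rw [hx.eq_fdet_of_isFareyPolygon hF hq hn (by omega), hF.eq_quiddity_zero_smul_add hq hn]
    simp only [fdet_sub_left, fdet_smul_left, fdet_add_left, fdet_swap (v (n - 1)) (v j)]
    ring
  rw [key]
  exact add_pos_of_pos_of_nonneg (mul_pos (by linarith) (hF.fdet_pos hj (by omega)))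
    (mul_nonneg h0.le (hF.fdet_nonneg (by omega) (by omega)))

end IsHillSolution

theorem stmt17_general (n m : ℕ) (hn : 3 ≤ n) (hm : 3 ≤ m)
    (v v' : ℕ → ℤ × ℤ) (hv : IsFareyPolygon n v) (hv' : IsFareyPolygon m v')
    (q q' : ℕ → ℤ)
    (hq : ∀ i, q i = ((fdet (v ((i + n - 1) % n)) (v ((i + 1) % n))).natAbs : ℤ))
    (hq' : ∀ i, q' i = ((fdet (v' ((i + m - 1) % m)) (v' ((i + 1) % m))).natAbs : ℤ))
    (a b c d : ℤ) (ha : 0 < a)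
    (hdet : a * d - b * c = 1) (h1 : q 0 * a < b) (h2 : q' 0 * a < c)
    (T : ℤ → ℤ → ℤ)
    (hT00 : T 0 0 = a) (hT01 : T 0 1 = b) (hT10 : T 1 0 = c) (hT11 : T 1 1 = d)
    (hrow : ∀ i j : ℤ, T i (j + 1) = q ((j % (n : ℤ)).toNat) * T i j - T i (j - 1))
    (hcol : ∀ i j : ℤ, T (i + 1) j = q' ((i % (m : ℤ)).toNat) * T i j - T (i - 1) j) :
    IsSL2Tiling T ∧ IsAntiperiodic n m T ∧ HasPosRect n m T := by
  have hrowT : ∀ i, IsHillSolution (fun j => q (j % (n : ℤ)).toNat) (T i) := hrow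
  have hcolT : ∀ j, IsHillSolution (fun i => q' (i % (m : ℤ)).toNat) (T · j) :=
    fun j i => hcol i j
  refine ⟨fun i j => ?_, fun i j => ⟨?_, ?_⟩, fun i j hi0 hi1 hj0 hj1 => ?_⟩
  · have hcols := (hcolT 0).wronskian_eq (hcolT 1) i
    rw [(hrowT i).wronskian_eq (hrowT (i + 1)) j]
    rw [hT00, hT01, hT10, hT11] at hcols
    linear_combination hcols + hdet
  · exact (hrowT i).antiperiodic hv hq hn j
  · exact (hcolT j).antiperiodic hv' hq' hm i
  · have hT0j : 0 < T 0 j :=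
      (hrowT 0).pos_of_isFareyPolygon hv hq hn (hT00 ▸ ha) (by rwa [hT00, hT01]) hj0 (by omega)
    -- with `z = T 1 - q'₀ T 0`: `a (z₁ - q₀ z₀) = 1 + (b - q₀ a) (c - q'₀ a)`
    have hz : 0 < T 1 j - q' 0 * T 0 j := by
      refine ((hrowT 1).sub_const_mul (hrowT 0) (q' 0)).pos_of_isFareyPolygon hv hq hn ?_ ?_ hj0
        (by omega)
      · simp only [hT00, hT10]; linarith
      · simp only [hT00, hT01, hT10, hT11]
        nlinarith [mul_pos (sub_pos.2 h1) (sub_pos.2 h2)]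
    exact (hcolT j).pos_of_isFareyPolygon hv' hq' hm hT0j (by linarith) hi0 (by omega)

/-- Construction of antiperiodic positive SL2-tilings from the quiddities of two Farey
polygons and a totally positive unimodular matrix: the array `T` generated by the double
recurrence with coefficients the two quiddities and initial block `[[a,b],[c,d]]`
(where `ad − bc = 1`, `q₀·a < b`, `q'₀·a < c`) is an `(n,m)`-antiperiodic SL2-tiling
with positive `m × n` fundamental rectangle. -/
theorem stmt17 (n m : ℕ) (hn : 3 ≤ n) (hm : 3 ≤ m)
    (v v' : ℕ → ℤ × ℤ) (hv : IsFareyPolygon n v) (hv' : IsFareyPolygon m v')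
    (q q' : ℕ → ℤ)
    (hq : ∀ i, q i = ((fdet (v ((i + n - 1) % n)) (v ((i + 1) % n))).natAbs : ℤ))
    (hq' : ∀ i, q' i = ((fdet (v' ((i + m - 1) % m)) (v' ((i + 1) % m))).natAbs : ℤ))
    (a b c d : ℤ) (ha : 0 < a) (hb : 0 < b) (hc : 0 < c) (hd : 0 < d)
    (hdet : a * d - b * c = 1) (h1 : q 0 * a < b) (h2 : q' 0 * a < c)
    (T : ℤ → ℤ → ℤ)
    (hT00 : T 0 0 = a) (hT01 : T 0 1 = b) (hT10 : T 1 0 = c) (hT11 : T 1 1 = d)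
    (hrow : ∀ i j : ℤ, T i (j + 1) = q ((j % (n : ℤ)).toNat) * T i j - T i (j - 1))
    (hcol : ∀ i j : ℤ, T (i + 1) j = q' ((i % (m : ℤ)).toNat) * T i j - T (i - 1) j) :
    IsSL2Tiling T ∧ IsAntiperiodic n m T ∧ HasPosRect n m T :=
  stmt17_general n m hn hm v v' hv hv' q q' hq hq' a b c d ha hdet h1 h2 T hT00 hT01 hT10 hT11 hrow
    hcol
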